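/- For any subset B ⊆ Y, the polar transform of the support function σ_B(x) = sup_{y∈B} ⟨x,y⟩ equals the Minkowski functional of the closed convex hull of B: (σ_B)° = μ_{closedConvexHull B}. -/

import Mathlib

open scoped Pointwise ENNReal

/-- The Minkowski functional of a set `A`, with values in `[0,∞]` and `inf ∅ = +∞`. -/
noncomputable def mink {M : Type*} [AddCommGroup M] [Module ℝ M] (A : Set M) (x : M) : ℝ≥0∞ :=
  sInf (ENNReal.ofReal '' {r : ℝ | 0 < r ∧ x ∈ r • A})

/-- The polar transform of an extended-real-valued function `g`:
`g°(y) = inf{λ > 0 : ⟨x,y⟩ ≤ λ g(x) for all x}`, with `inf ∅ = +∞`. -/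
noncomputable def polarTr {X Y : Type*} [AddCommGroup X] [Module ℝ X]
    [AddCommGroup Y] [Module ℝ Y] (p : X →ₗ[ℝ] Y →ₗ[ℝ] ℝ) (g : X → EReal) (y : Y) : ℝ≥0∞ :=
  sInf {l : ℝ≥0∞ | ∃ r : ℝ, 0 < r ∧ l = ENNReal.ofReal r ∧
    ∀ x : X, (p x y : EReal) ≤ (r : EReal) * g x}

/-! For `r > 0`, the condition `⟨x, y⟩ ≤ r σ_B(x)` for all `x` says `r⁻¹ y` lies in every closed
half-space containing `B`. By Hahn–Banach in `σ(Y, X)`, whose continuous functionals are exactly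
the `⟨x, ·⟩`, the intersection of these half-spaces is the closed convex hull `C` of `B`, so the
condition is `y ∈ r C`, and the two infima range over the same set of `r`. -/

/-- The support function `σ_B`; it is `⊥` when `B = ∅`. -/
noncomputable def supportFn {X Y : Type*} [AddCommGroup X] [Module ℝ X] [AddCommGroup Y]
    [Module ℝ Y] (p : X →ₗ[ℝ] Y →ₗ[ℝ] ℝ) (B : Set Y) (x : X) : EReal :=
  ⨆ b ∈ B, (p x b : EReal)

section SupportFunction

variable {X Y : Type*} [AddCommGroup X] [Module ℝ X] [AddCommGroup Y] [Module ℝ Y]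
  {p : X →ₗ[ℝ] Y →ₗ[ℝ] ℝ}

lemma isClosed_setOf_pairing_le (x : X) (s : EReal) :
    IsClosed {c : WeakBilin p.flip | (p x c : EReal) ≤ s} :=
  isClosed_le (continuous_coe_real_ereal.comp (WeakBilin.eval_continuous p.flip x))
    continuous_const

lemma convex_setOf_pairing_le (x : X) (s : EReal) :
    Convex ℝ {c : WeakBilin p.flip | (p x c : EReal) ≤ s} :=
  (Set.ordConnected_Iic.preimage_mono EReal.coe_strictMono.monotone).convex.linear_preimage (p x)

theorem mem_closure_convexHull_iff_forall_le_supportFn {B : Set (WeakBilin p.flip)}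
    {c : WeakBilin p.flip} :
    c ∈ closure (convexHull ℝ B) ↔ ∀ x, (p x c : EReal) ≤ supportFn p B x := by
  constructor
  · intro hc x
    refine closure_minimal (convexHull_min ?_ (convex_setOf_pairing_le x _))
      (isClosed_setOf_pairing_le x _) hc
    exact fun b hb => le_iSup₂ (f := fun b _ => (p x b : EReal)) b hb
  · intro h
    by_contra hc
    obtain ⟨f, u, hfB, hfc⟩ := geometric_hahn_banach_closed_point
      (convex_convexHull ℝ B).closure isClosed_closure hc
    obtain ⟨x, rfl⟩ := LinearMap.dualEmbedding_surjective p.flip f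
    have hσ : supportFn p B x ≤ u := iSup₂_le fun b hb =>
      EReal.coe_le_coe_iff.2 (hfB b (subset_closure (subset_convexHull ℝ B hb))).le
    exact hfc.not_ge (EReal.coe_le_coe_iff.1 ((h x).trans hσ))

theorem mem_smul_closure_convexHull_iff {B : Set (WeakBilin p.flip)} {r : ℝ} (hr : 0 < r)
    {y : WeakBilin p.flip} :
    y ∈ r • closure (convexHull ℝ B) ↔ ∀ x, (p x y : EReal) ≤ r * supportFn p B x := by
  rw [Set.mem_smul_set_iff_inv_smul_mem₀ hr.ne', mem_closure_convexHull_iff_forall_le_supportFn]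
  refine forall_congr' fun x => ?_
  have hscale : p x (r⁻¹ • y) = r⁻¹ * p x y := (p x).map_smul r⁻¹ y
  rw [hscale, inv_mul_eq_div, EReal.coe_div,
    EReal.div_le_iff_le_mul (EReal.coe_pos.2 hr) (EReal.coe_ne_top r)]

end SupportFunction

/-- The polar transform of the support function `σ_B` is the Minkowski functional of the
closed convex hull of `B` (for the weak topology `σ(Y,X)`). -/
theorem polarTr_supportFn {X Y : Type*} [AddCommGroup X] [Module ℝ X]
    [AddCommGroup Y] [Module ℝ Y] (p : X →ₗ[ℝ] Y →ₗ[ℝ] ℝ)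
    (B : Set (WeakBilin p.flip)) :
    ∀ y : WeakBilin p.flip,
      polarTr p (fun x : X => ⨆ b ∈ B, (p x b : EReal)) y =
        mink (closure (convexHull ℝ B)) y := by
  intro y
  unfold polarTr mink
  congr 1
  ext l
  constructor
  · rintro ⟨r, hr, rfl, hσ⟩
    exact ⟨r, ⟨hr, (mem_smul_closure_convexHull_iff hr).2 hσ⟩, rfl⟩
  · rintro ⟨r, ⟨hr, hy⟩, rfl⟩
    exact ⟨r, hr, rfl, (mem_smul_closure_convexHull_iff hr).1 hy⟩
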